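/- Let A be an n×n Hermitian matrix over ℍ, let i ∈ {1,…,n}, and let b = c₁·a_{i₁.} + ⋯ + c_k·a_{i_k.} be a left ℍ-linear combination of rows of A with indices i₁,…,i_k all different from i (c₁,…,c_k ∈ ℍ). Then rdet_i A_{i.}(b) = 0 and cdet_i A_{i.}(b) = 0. -/

import Mathlib

open Quaternion Matrix Finset

noncomputable section

/-- Ordered product of the entries of `A` along the cycle of `σ` containing `x`,
starting at `x`:  `a_{x,σx} · a_{σx,σ²x} ⋯ a_{σ^{c-1}x,x}`. -/
def cycProd {n : ℕ} (A : Matrix (Fin n) (Fin n) ℍ[ℝ]) (σ : Equiv.Perm (Fin n))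
    (x : Fin n) : ℍ[ℝ] :=
  ((List.range (Function.minimalPeriod (⇑σ) x)).map
    (fun t => A ((⇑σ)^[t] x) ((⇑σ)^[t + 1] x))).prod

/-- `x` is the smallest element of its `σ`-cycle. -/
def isLeaderB {n : ℕ} (σ : Equiv.Perm (Fin n)) (x : Fin n) : Bool :=
  (List.range n).all fun t => decide (x ≤ (⇑σ)^[t] x)

/-- `x` lies in the `σ`-cycle of `i`. -/
def inCycleB {n : ℕ} (σ : Equiv.Perm (Fin n)) (i x : Fin n) : Bool :=
  (List.range n).any fun t => decide ((⇑σ)^[t] i = x)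

/-- The increasing list of the smallest elements of the `σ`-cycles other than
the cycle of `i`. -/
def leaders {n : ℕ} (σ : Equiv.Perm (Fin n)) (i : Fin n) : List (Fin n) :=
  (List.finRange n).filter fun x => isLeaderB σ x && !(inCycleB σ i x)

/-- The `i`-th row determinant of a quaternion matrix: the sum over all
permutations, written in left-ordered cycle notation (the cycle of `i` first,
starting with `i`; every other cycle starting with its smallest element, these
smallest elements increasing from left to right), of the sign times the ordered
product of the corresponding entries. -/
def rdet {n : ℕ} (A : Matrix (Fin n) (Fin n) ℍ[ℝ]) (i : Fin n) : ℍ[ℝ] :=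
  ∑ σ : Equiv.Perm (Fin n),
    ((Equiv.Perm.sign σ : ℤ) : ℍ[ℝ]) *
      (cycProd A σ i * ((leaders σ i).map (cycProd A σ)).prod)

/-- The `j`-th column determinant of a quaternion matrix: the sum over all
permutations, written in right-ordered cycle notation (the cycle of `j` last,
ending with `j`; every other cycle ending with its smallest element, these
smallest elements increasing from right to left), of the sign times the ordered
product of the corresponding entries. -/
def cdet {n : ℕ} (A : Matrix (Fin n) (Fin n) ℍ[ℝ]) (j : Fin n) : ℍ[ℝ] :=
  ∑ τ : Equiv.Perm (Fin n),
    ((Equiv.Perm.sign τ : ℤ) : ℍ[ℝ]) *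
      ((((leaders τ j).reverse).map (cycProd A τ)).prod * cycProd A τ j)

/-- The determinant of a (Hermitian) quaternion matrix: the common value of all
row and column determinants. -/
def Hdet : {m : ℕ} → Matrix (Fin m) (Fin m) ℍ[ℝ] → ℍ[ℝ]
  | 0, _ => 1
  | _ + 1, A => rdet A 0

/-- The principal submatrix of `M` with rows and columns indexed by `β`. -/
def principalSub {n : ℕ} (M : Matrix (Fin n) (Fin n) ℍ[ℝ]) (β : Finset (Fin n)) :
    Matrix (Fin β.card) (Fin β.card) ℍ[ℝ] :=
  M.submatrix (⇑(β.orderEmbOfFin rfl)) (⇑(β.orderEmbOfFin rfl))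

/-- The position of `i` inside the increasing enumeration of the finset `β`. -/
def posIn {n : ℕ} (β : Finset (Fin n)) {i : Fin n} (h : i ∈ β) : Fin β.card :=
  (β.orderIsoOfFin rfl).symm ⟨i, h⟩

/-- `Σ_{β ∈ J_{s,n}{i}} cdet_i (M_β^β)`: the sum, over all subsets `β` of
cardinality `s` containing `i`, of the column determinants of the principal
submatrix `M_β^β` taken at the position of `i` within `β`. -/
def cdetPM {n : ℕ} (M : Matrix (Fin n) (Fin n) ℍ[ℝ]) (s : ℕ) (i : Fin n) : ℍ[ℝ] :=
  ∑ β ∈ ((Finset.powersetCard s (Finset.univ : Finset (Fin n))).filter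
      fun β => i ∈ β).attach,
    cdet (principalSub M β.1) (posIn β.1 (Finset.mem_filter.mp β.2).2)

/-- `Σ_{α ∈ I_{s,n}{j}} rdet_j (M_α^α)`: the sum, over all subsets `α` of
cardinality `s` containing `j`, of the row determinants of the principal
submatrix `M_α^α` taken at the position of `j` within `α`. -/
def rdetPM {n : ℕ} (M : Matrix (Fin n) (Fin n) ℍ[ℝ]) (s : ℕ) (j : Fin n) : ℍ[ℝ] :=
  ∑ α ∈ ((Finset.powersetCard s (Finset.univ : Finset (Fin n))).filter
      fun α => j ∈ α).attach,
    rdet (principalSub M α.1) (posIn α.1 (Finset.mem_filter.mp α.2).2)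

/-- The sum of all principal minors of `M` of order `r`. -/
def minorSum {n : ℕ} (M : Matrix (Fin n) (Fin n) ℍ[ℝ]) (r : ℕ) : ℍ[ℝ] :=
  ∑ β ∈ Finset.powersetCard r (Finset.univ : Finset (Fin n)),
    Hdet (principalSub M β)

/-- The (column) rank of a quaternion matrix: the dimension of the span of its
columns as a right `ℍ`-vector space. -/
def qrank {m n : ℕ} (A : Matrix (Fin m) (Fin n) ℍ[ℝ]) : ℕ :=
  Module.finrank ℍ[ℝ]ᵐᵒᵖ
    (Submodule.span ℍ[ℝ]ᵐᵒᵖ (Set.range Aᵀ) : Submodule ℍ[ℝ]ᵐᵒᵖ (Fin m → ℍ[ℝ]))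

/-- `Ind A = k`: `k` is the smallest nonnegative integer with
`rank A^(k+1) = rank A^k`. -/
def isInd {n : ℕ} (A : Matrix (Fin n) (Fin n) ℍ[ℝ]) (k : ℕ) : Prop :=
  qrank (A ^ (k + 1)) = qrank (A ^ k) ∧
    ∀ l < k, qrank (A ^ (l + 1)) ≠ qrank (A ^ l)

/-- `X` is a Drazin inverse of `A` (relative to the index `k`). -/
def isDrazin {n : ℕ} (A X : Matrix (Fin n) (Fin n) ℍ[ℝ]) (k : ℕ) : Prop :=
  A ^ (k + 1) * X = A ^ k ∧ X * A * X = X ∧ A * X = X * A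

end

/-!
Both determinants are additive in the replaced row, so it suffices to show that they vanish when
row `i` is replaced by `c • a_j` with `j ≠ i`. The summands are then grouped into quartets
`σ`, `ρσ`, `σ (i j)`, `ρσ (i j)` over the permutations `σ` in which `i` and `j` lie in different
cycles: `ρ` reverses the cycle of `j`, and multiplying by the transposition `(i j)` merges the
cycles of `i` and `j` (every permutation in which they share a cycle arises exactly once this
way). Since `A` is Hermitian, reversing a cycle conjugates its product, so the first two summands
add up to an expression containing `p + p̄ = 2 Re p` in place of the factor `p` of the cycle of
`j`, while the last two give minus the same expression with `q + q̄` for the product `q` of that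
cycle read from `j` (which now sits inside the cycle of `i`). Real quaternions are central and
`Re (ab) = Re (ba)`, so `Re p = Re q` and every quartet cancels.
-/

open Equiv Equiv.Perm Function

theorem Function.iterate_eq_iterate_of_eqOn {α : Type*} {f g : α → α} {x : α} {m : ℕ}
    (h : ∀ t < m, g (f^[t] x) = f (f^[t] x)) : ∀ t ≤ m, g^[t] x = f^[t] x := by
  intro t ht
  induction t with
  | zero => rfl
  | succ t ih => rw [iterate_succ_apply', iterate_succ_apply', ih (by omega), h t (by omega)]

theorem Function.minimalPeriod_congr_of_iterate_eq {α : Type*} {f g : α → α} {x : α}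
    (h : ∀ t, f^[t] x = g^[t] x) : minimalPeriod f x = minimalPeriod g x := by
  simp only [minimalPeriod_eq_minimalPeriod_iff, IsPeriodicPt, IsFixedPt, h, implies_true]

namespace Equiv.Perm

theorem minimalPeriod_inv {α : Type*} (σ : Perm α) (x : α) :
    minimalPeriod ⇑σ⁻¹ x = minimalPeriod σ x := by
  simpa [MulAction.period_eq_minimalPeriod, Perm.smul_def] using MulAction.period_inv σ x

section Finite

variable {α : Type*} [Finite α] (σ : Perm α)

theorem minimalPeriod_pos (x : α) : 0 < minimalPeriod σ x :=
  minimalPeriod_pos_of_mem_periodicPts (σ.injective.mem_periodicPts x)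

variable {σ}

theorem sameCycle_iff_exists_iterate {x y : α} :
    σ.SameCycle x y ↔ ∃ t : ℕ, σ^[t] x = y := by
  refine ⟨fun h => ?_, fun ⟨t, ht⟩ => ⟨t, by rw [zpow_natCast, coe_pow, ht]⟩⟩
  obtain ⟨t, ht⟩ := h.exists_nat_pow_eq
  exact ⟨t, by rwa [← coe_pow]⟩

theorem sameCycle_iterate (x : α) (t : ℕ) : σ.SameCycle x (σ^[t] x) :=
  sameCycle_iff_exists_iterate.mpr ⟨t, rfl⟩

theorem sameCycle_iff_exists_iterate_lt {x y : α} :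
    σ.SameCycle x y ↔ ∃ t < minimalPeriod σ x, σ^[t] x = y := by
  refine ⟨fun h => ?_, fun ⟨t, _, ht⟩ => sameCycle_iff_exists_iterate.mpr ⟨t, ht⟩⟩
  obtain ⟨t, rfl⟩ := sameCycle_iff_exists_iterate.mp h
  exact ⟨t % minimalPeriod σ x, Nat.mod_lt _ (σ.minimalPeriod_pos x),
    iterate_mod_minimalPeriod_eq⟩

theorem sameCycle_iff_exists_pos_iterate_le {x y : α} :
    σ.SameCycle x y ↔ ∃ t, 0 < t ∧ t ≤ minimalPeriod σ x ∧ σ^[t] x = y := by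
  refine ⟨fun h => ?_, fun ⟨t, _, _, ht⟩ => sameCycle_iff_exists_iterate.mpr ⟨t, ht⟩⟩
  obtain ⟨t, ht, rfl⟩ := sameCycle_iff_exists_iterate_lt.mp h
  rcases Nat.eq_zero_or_pos t with rfl | h0
  · exact ⟨_, σ.minimalPeriod_pos x, le_rfl, iterate_minimalPeriod⟩
  · exact ⟨t, h0, ht.le, rfl⟩

theorem sameCycle_congr_of_iterate_eq {τ : Perm α} {x : α} (h : ∀ t, σ^[t] x = τ^[t] x)
    (y : α) : σ.SameCycle x y ↔ τ.SameCycle x y := by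
  simp only [sameCycle_iff_exists_iterate, h]

theorem mem_of_sameCycle_of_mapsTo {s : Set α} (hs : Set.MapsTo σ s s) {x y : α}
    (hx : x ∈ s) (h : σ.SameCycle x y) : y ∈ s := by
  obtain ⟨t, rfl⟩ := sameCycle_iff_exists_iterate.mp h
  exact hs.iterate t hx

end Finite

section Fintype

variable {α : Type*} [Fintype α] [DecidableEq α] {σ : Perm α} {i j x : α}

/-- The permutation obtained from `σ` by reversing the orientation of the cycle through `j`. -/
def reverseCycle (σ : Perm α) (j : α) : Perm α :=
  σ * (σ.cycleOf j)⁻¹ * (σ.cycleOf j)⁻¹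

theorem inv_cycleOf_apply_of_sameCycle (h : σ.SameCycle j x) :
    (σ.cycleOf j)⁻¹ x = σ⁻¹ x := by
  rw [cycleOf_inv]
  exact (sameCycle_inv.mpr h).cycleOf_apply

theorem reverseCycle_apply_of_sameCycle (h : σ.SameCycle j x) :
    σ.reverseCycle j x = σ⁻¹ x := by
  have h' : σ.SameCycle j (σ⁻¹ x) := sameCycle_apply_right.mp (by simpa using h)
  rw [reverseCycle, mul_apply, mul_apply, inv_cycleOf_apply_of_sameCycle h,
    inv_cycleOf_apply_of_sameCycle h']
  exact σ.apply_symm_apply _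

theorem reverseCycle_apply_of_not_sameCycle (h : ¬σ.SameCycle j x) :
    σ.reverseCycle j x = σ x := by
  have hx : (σ.cycleOf j)⁻¹ x = x := by rw [inv_eq_iff_eq, cycleOf_apply_of_not_sameCycle h]
  rw [reverseCycle, mul_apply, mul_apply, hx, hx]

theorem iterate_reverseCycle_of_sameCycle (h : σ.SameCycle j x) (t : ℕ) :
    (σ.reverseCycle j)^[t] x = (σ⁻¹ : Perm α)^[t] x := by
  refine iterate_eq_iterate_of_eqOn (m := t) (fun s _ => ?_) t le_rfl
  exact reverseCycle_apply_of_sameCycle (h.trans (sameCycle_inv.mp (sameCycle_iterate x s)))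

theorem iterate_reverseCycle_of_not_sameCycle (h : ¬σ.SameCycle j x) (t : ℕ) :
    (σ.reverseCycle j)^[t] x = σ^[t] x := by
  refine iterate_eq_iterate_of_eqOn (m := t) (fun s _ => ?_) t le_rfl
  exact reverseCycle_apply_of_not_sameCycle fun h' => h (h'.trans (sameCycle_iterate x s).symm)

theorem sameCycle_reverseCycle_iff {y : α} :
    (σ.reverseCycle j).SameCycle x y ↔ σ.SameCycle x y := by
  by_cases h : σ.SameCycle j x
  · rw [sameCycle_congr_of_iterate_eq (iterate_reverseCycle_of_sameCycle h), sameCycle_inv]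
  · rw [sameCycle_congr_of_iterate_eq (iterate_reverseCycle_of_not_sameCycle h)]

theorem reverseCycle_reverseCycle (σ : Perm α) (j : α) :
    (σ.reverseCycle j).reverseCycle j = σ := by
  ext x
  by_cases h : σ.SameCycle j x
  · rw [reverseCycle_apply_of_sameCycle (sameCycle_reverseCycle_iff.mpr h), inv_eq_iff_eq,
      reverseCycle_apply_of_sameCycle (h.trans (sameCycle_apply_right.mpr (SameCycle.refl σ x)))]
    simp
  · rw [reverseCycle_apply_of_not_sameCycle (mt sameCycle_reverseCycle_iff.mp h),
      reverseCycle_apply_of_not_sameCycle h]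

theorem sign_reverseCycle (σ : Perm α) (j : α) : sign (σ.reverseCycle j) = sign σ := by
  rw [reverseCycle, map_mul, map_mul, mul_assoc, Int.units_mul_self, mul_one]

omit [Fintype α] in
theorem mul_swap_apply_of_ne {y : α} (hi : y ≠ i) (hj : y ≠ j) : (σ * swap i j) y = σ y := by
  rw [mul_apply, swap_apply_of_ne_of_ne hi hj]

theorem iterate_mul_swap_of_not_sameCycle (hi : ¬σ.SameCycle x i) (hj : ¬σ.SameCycle x j)
    (t : ℕ) : (σ * swap i j)^[t] x = σ^[t] x :=
  iterate_eq_iterate_of_eqOn (m := t) (fun s _ => mul_swap_apply_of_ne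
    (fun h => hi (h ▸ sameCycle_iterate x s :)) (fun h => hj (h ▸ sameCycle_iterate x s :)))
    t le_rfl

/-- If `i` and `j` lie in different cycles, multiplying by `swap i j` merges them: from `i`, the
new cycle first runs through the old cycle of `j`. -/
theorem iterate_mul_swap_left (h : ¬σ.SameCycle i j) {t : ℕ} (h0 : 0 < t)
    (ht : t ≤ minimalPeriod σ j) : (σ * swap i j)^[t] i = σ^[t] j := by
  obtain ⟨s, rfl⟩ : ∃ s, t = s + 1 := ⟨t - 1, by omega⟩
  rw [iterate_succ_apply, mul_apply, swap_apply_left, iterate_succ_apply]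
  refine iterate_eq_iterate_of_eqOn (m := s) (fun r hr => mul_swap_apply_of_ne ?_ ?_) s le_rfl
  · rw [← iterate_succ_apply]
    exact fun h' => h (h' ▸ sameCycle_iterate j (r + 1)).symm
  · rw [← iterate_succ_apply]
    exact not_isPeriodicPt_of_pos_of_lt_minimalPeriod (n := r + 1) (by omega) (by omega)

theorem iterate_mul_swap_right (h : ¬σ.SameCycle i j) {t : ℕ} (h0 : 0 < t)
    (ht : t ≤ minimalPeriod σ i) : (σ * swap i j)^[t] j = σ^[t] i := by
  rw [swap_comm]
  exact iterate_mul_swap_left (fun h' => h h'.symm) h0 ht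

theorem minimalPeriod_mul_swap (h : ¬σ.SameCycle i j) :
    minimalPeriod (σ * swap i j) i = minimalPeriod σ j + minimalPeriod σ i := by
  have hd := σ.minimalPeriod_pos j
  have hc := σ.minimalPeriod_pos i
  have hj : (σ * swap i j)^[minimalPeriod σ j] i = j := by
    rw [iterate_mul_swap_left h hd le_rfl, iterate_minimalPeriod]
  have hmid : ∀ s, 0 < s → s ≤ minimalPeriod σ i →
      (σ * swap i j)^[minimalPeriod σ j + s] i = σ^[s] i := by
    intro s hs hs'
    rw [add_comm, iterate_add_apply, hj, iterate_mul_swap_right h hs hs']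
  have hper : IsPeriodicPt (σ * swap i j) (minimalPeriod σ j + minimalPeriod σ i) i := by
    rw [IsPeriodicPt, IsFixedPt, hmid _ hc le_rfl, iterate_minimalPeriod]
  refine le_antisymm (hper.minimalPeriod_le (by omega)) (not_lt.mp fun hlt => ?_)
  have hpos := (σ * swap i j).minimalPeriod_pos i
  have hfix := iterate_minimalPeriod (f := σ * swap i j) (x := i)
  rcases le_or_gt (minimalPeriod (σ * swap i j) i) (minimalPeriod σ j) with hle | hgt
  · rw [iterate_mul_swap_left h hpos hle] at hfix
    exact h (hfix ▸ sameCycle_iterate j _).symm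
  · obtain ⟨s, hs⟩ : ∃ s, minimalPeriod (σ * swap i j) i = minimalPeriod σ j + s :=
      ⟨_, (Nat.add_sub_of_le hgt.le).symm⟩
    rw [hs, hmid s (by omega) (by omega)] at hfix
    exact not_isPeriodicPt_of_pos_of_lt_minimalPeriod (by omega) (by omega) hfix

theorem sameCycle_mul_swap_iff (h : ¬σ.SameCycle i j) :
    (σ * swap i j).SameCycle i x ↔ σ.SameCycle i x ∨ σ.SameCycle j x := by
  have hij : (σ * swap i j).SameCycle i j := by
    refine sameCycle_iff_exists_iterate.mpr ⟨minimalPeriod σ j, ?_⟩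
    rw [iterate_mul_swap_left h (σ.minimalPeriod_pos j) le_rfl, iterate_minimalPeriod]
  constructor
  · refine mem_of_sameCycle_of_mapsTo (s := {y | σ.SameCycle i y ∨ σ.SameCycle j y})
      (fun y hy => ?_) (Or.inl (SameCycle.refl σ i))
    rw [Set.mem_ofPred_eq, mul_apply, sameCycle_apply_right, sameCycle_apply_right]
    rcases eq_or_ne y i with rfl | hi
    · rw [swap_apply_left]; exact Or.inr (SameCycle.refl σ j)
    rcases eq_or_ne y j with rfl | hj
    · rw [swap_apply_right]; exact Or.inl (SameCycle.refl σ i)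
    rwa [swap_apply_of_ne_of_ne hi hj]
  · rintro (hx | hx)
    · obtain ⟨t, ht0, htc, rfl⟩ := sameCycle_iff_exists_pos_iterate_le.mp hx
      rw [← iterate_mul_swap_right h ht0 htc]
      exact hij.trans (sameCycle_iterate j t)
    · obtain ⟨t, ht0, htd, rfl⟩ := sameCycle_iff_exists_pos_iterate_le.mp hx
      rw [← iterate_mul_swap_left h ht0 htd]
      exact sameCycle_iterate i t

theorem sameCycle_mul_swap (h : ¬σ.SameCycle i j) : (σ * swap i j).SameCycle i j :=
  (sameCycle_mul_swap_iff h).mpr (Or.inr (SameCycle.refl σ j))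

theorem not_sameCycle_mul_swap (hij : i ≠ j) (h : σ.SameCycle i j) :
    ¬(σ * swap i j).SameCycle i j := by
  obtain ⟨m, hm, hmj⟩ := sameCycle_iff_exists_iterate_lt.mp h
  have hm0 : 0 < m := Nat.pos_of_ne_zero fun h0 => hij (by rw [← hmj, h0, iterate_zero_apply])
  -- the points strictly after `i` and up to `j` on the old cycle form the new cycle of `j`
  set S := {y | ∃ s, 0 < s ∧ s ≤ m ∧ σ^[s] i = y}
  have hiS : i ∉ S := fun ⟨s, hs0, hsm, hs⟩ =>
    not_isPeriodicPt_of_pos_of_lt_minimalPeriod (n := s) (by omega) (by omega) hs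
  have hS : Set.MapsTo (σ * swap i j) S S := by
    rintro _ ⟨s, hs0, hsm, rfl⟩
    rcases hsm.lt_or_eq with hsm | rfl
    · have hsj : σ^[s] i ≠ j := by
        rw [← hmj]
        exact fun h' => hsm.ne ((iterate_eq_iterate_iff_of_lt_minimalPeriod (by omega) hm).mp h')
      refine ⟨s + 1, by omega, hsm, ?_⟩
      rw [mul_swap_apply_of_ne (fun h' => hiS ⟨s, hs0, hsm.le, h'⟩) hsj, iterate_succ_apply']
    · exact ⟨1, one_pos, hm0, by rw [hmj, mul_apply, swap_apply_right, iterate_one]⟩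
  exact fun h' => hiS (mem_of_sameCycle_of_mapsTo hS ⟨m, hm0, le_rfl, hmj⟩ h'.symm)

end Fintype

end Equiv.Perm

theorem Finset.sum_eq_zero_of_quartets {ι M : Type*} [Fintype ι] [AddCommGroup M]
    [IsAddTorsionFree M] {p : ι → Prop} [DecidablePred p] (f : ι → M) {g ρ : ι → ι}
    (hg : Involutive g) (hgp : ∀ x, p x → ¬p (g x)) (hgp' : ∀ x, ¬p x → p (g x))
    (hρ : Involutive ρ) (hρp : ∀ x, p x → p (ρ x))
    (h : ∀ x, p x → f x + f (ρ x) + f (g x) + f (g (ρ x)) = 0) : ∑ x, f x = 0 := by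
  set F := fun x => f x + f (g x)
  have hsplit : ∑ x, f x = ∑ x with p x, F x := by
    rw [← Finset.sum_filter_add_sum_filter_not Finset.univ p, Finset.sum_add_distrib]
    congr 1
    refine (Finset.sum_nbij' g g (by simpa using hgp) (by simpa using hgp')
      (fun x _ => hg x) (fun x _ => hg x) fun x _ => rfl).symm
  have hρsum : ∑ x with p x, F (ρ x) = ∑ x with p x, F x :=
    Finset.sum_nbij' ρ ρ (by simpa using hρp) (by simpa using hρp)
      (fun x _ => hρ x) (fun x _ => hρ x) fun x _ => rfl
  have htwice : 2 • ∑ x with p x, F x = 0 := by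
    rw [two_nsmul]
    nth_rewrite 1 [← hρsum]
    rw [← Finset.sum_add_distrib]
    refine Finset.sum_eq_zero fun x hx => ?_
    rw [← h x (Finset.mem_filter.mp hx).2]
    simp only [F]
    abel
  rw [hsplit, ← nsmul_right_injective two_ne_zero (htwice.trans (smul_zero 2).symm)]

theorem Equiv.Perm.sum_eq_zero_of_quartets {α M : Type*} [Fintype α] [DecidableEq α]
    [AddCommGroup M] [IsAddTorsionFree M] {i j : α} (hij : i ≠ j) (f : Perm α → M)
    (h : ∀ σ : Perm α, ¬σ.SameCycle i j → f σ + f (σ.reverseCycle j) + f (σ * swap i j)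
      + f (σ.reverseCycle j * swap i j) = 0) :
    ∑ σ, f σ = 0 := by
  classical
  exact Finset.sum_eq_zero_of_quartets (p := fun σ : Perm α => ¬σ.SameCycle i j) f
    (fun σ => by simp [mul_assoc]) (fun _ h => not_not.mpr (sameCycle_mul_swap h))
    (fun _ h => not_sameCycle_mul_swap hij (not_not.mp h))
    (fun σ => reverseCycle_reverseCycle σ j) (fun _ h => mt sameCycle_reverseCycle_iff.mp h) h

namespace List

variable {ι R : Type*} [DecidableEq ι] {a : ι}

theorem prod_map_update_add [Semiring R] {L : List ι} (hL : L.Nodup) (ha : a ∈ L) (f : ι → R)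
    (u v : R) :
    (L.map (update f a u)).prod + (L.map (update f a v)).prod
      = (L.map (update f a (u + v))).prod := by
  induction L with
  | nil => simp at ha
  | cons x L ih =>
    obtain ⟨hxL, hL⟩ := nodup_cons.mp hL
    rcases eq_or_ne a x with rfl | hax
    · have hrest : ∀ w, L.map (update f a w) = L.map f := fun w =>
        map_congr_left fun y hy => update_of_ne (by rintro rfl; exact hxL hy) w f
      simp only [map_cons, prod_cons, update_self, hrest, add_mul]
    · simp only [map_cons, prod_cons, update_of_ne hax.symm, ← mul_add,
        ih hL ((mem_cons.mp ha).resolve_left hax)]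

theorem prod_map_update_of_commute [Monoid R] {L : List ι} (hL : L.Nodup) (ha : a ∈ L)
    (f : ι → R) {r : R} (hr : ∀ y, Commute r y) :
    (L.map (update f a r)).prod = r * ((L.filter (· ≠ a)).map f).prod := by
  induction L with
  | nil => simp at ha
  | cons x L ih =>
    obtain ⟨hxL, hL⟩ := nodup_cons.mp hL
    rcases eq_or_ne a x with rfl | hax
    · have hrest : L.map (update f a r) = L.map f :=
        map_congr_left fun y hy => update_of_ne (by rintro rfl; exact hxL hy) r f
      have hfilter : L.filter (· ≠ a) = L :=
        filter_eq_self.mpr fun y hy => decide_eq_true (by rintro rfl; exact hxL hy)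
      rw [map_cons, prod_cons, update_self, hrest, filter_cons_of_neg (by simp), hfilter]
    · rw [map_cons, prod_cons, update_of_ne hax.symm, ih hL ((mem_cons.mp ha).resolve_left hax),
        filter_cons_of_pos (by simpa using hax.symm), map_cons, prod_cons,
        (hr (f x)).left_comm]

end List

theorem Quaternion.re_mul_comm (a b : ℍ[ℝ]) : (a * b).re = (b * a).re := by
  simp only [re_mul]
  ring

section WalkProd

variable {α R : Type*} [Monoid R]

def walkProd (M : Matrix α α R) (f : α → α) (x : α) (m : ℕ) : R :=
  ((List.range m).map fun t => M (f^[t] x) (f^[t + 1] x)).prod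

variable {M N : Matrix α α R} {f g : α → α} {x y : α}

theorem walkProd_zero : walkProd M f x 0 = 1 := rfl

theorem walkProd_add (a b : ℕ) :
    walkProd M f x (a + b) = walkProd M f x a * walkProd M f (f^[a] x) b := by
  simp only [walkProd, List.range_add, List.map_append, List.prod_append, List.map_map]
  congr 3
  ext t
  rw [Function.comp_apply, ← iterate_add_apply, ← iterate_add_apply,
    show t + a = a + t by omega, show t + 1 + a = a + t + 1 by omega]

theorem walkProd_succ (m : ℕ) :
    walkProd M f x (m + 1) = walkProd M f x m * M (f^[m] x) (f^[m + 1] x) := by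
  rw [walkProd_add, iterate_succ_apply']
  simp [walkProd]

theorem walkProd_succ' (m : ℕ) :
    walkProd M f x (m + 1) = M x (f x) * walkProd M f (f x) m := by
  rw [add_comm, walkProd_add]
  simp [walkProd]

theorem walkProd_congr {m : ℕ}
    (h : ∀ t < m, M (f^[t] x) (f^[t + 1] x) = N (g^[t] y) (g^[t + 1] y)) :
    walkProd M f x m = walkProd N g y m :=
  congrArg List.prod (List.map_congr_left fun t ht => h t (List.mem_range.mp ht))

theorem walkProd_congr_of_iterate_eq {m : ℕ} (h : ∀ t ≤ m, f^[t] x = g^[t] y) :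
    walkProd M f x m = walkProd M g y m :=
  walkProd_congr fun t ht => by rw [h t ht.le, h (t + 1) ht]

theorem walkProd_updateRow_of_forall_ne [DecidableEq α] {m : ℕ} {i : α} (b : α → R)
    (h : ∀ t < m, f^[t] x ≠ i) : walkProd (M.updateRow i b) f x m = walkProd M f x m :=
  walkProd_congr fun t ht => by rw [updateRow_apply, if_neg (h t ht)]

theorem star_walkProd [StarMul R] (σ : Perm α) (m : ℕ) :
    star (walkProd M σ x m) = walkProd Mᴴ ⇑σ⁻¹ (σ^[m] x) m := by
  induction m with
  | zero => simp [walkProd_zero]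
  | succ m ih =>
    rw [walkProd_succ, star_mul, ih, walkProd_succ', iterate_succ_apply' σ m x,
      conjTranspose_apply]
    simp

end WalkProd

section Leaders

variable {n : ℕ} {σ τ : Perm (Fin n)} {i j l x : Fin n}

theorem inCycleB_eq_true_iff : inCycleB σ i x = true ↔ σ.SameCycle i x := by
  rw [inCycleB, List.any_eq_true]
  simp only [List.mem_range, decide_eq_true_eq]
  refine ⟨fun ⟨t, _, ht⟩ => sameCycle_iff_exists_iterate.mpr ⟨t, ht⟩, fun h => ?_⟩
  obtain ⟨t, ht, rfl⟩ := sameCycle_iff_exists_iterate_lt.mp h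
  exact ⟨t, ht.trans_le (minimalPeriod_le_card.trans_eq (Fintype.card_fin n)), rfl⟩

theorem isLeaderB_eq_true_iff : isLeaderB σ x = true ↔ ∀ y, σ.SameCycle x y → x ≤ y := by
  rw [isLeaderB, List.all_eq_true]
  simp only [List.mem_range, decide_eq_true_eq]
  refine ⟨fun h y hy => ?_, fun h t _ => h _ (sameCycle_iterate x t)⟩
  obtain ⟨t, ht, rfl⟩ := sameCycle_iff_exists_iterate_lt.mp hy
  exact h t (ht.trans_le (minimalPeriod_le_card.trans_eq (Fintype.card_fin n)))

theorem mem_leaders_iff :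
    x ∈ leaders σ i ↔ (∀ y, σ.SameCycle x y → x ≤ y) ∧ ¬σ.SameCycle i x := by
  simp [leaders, isLeaderB_eq_true_iff, ← inCycleB_eq_true_iff]

theorem nodup_leaders (σ : Perm (Fin n)) (i : Fin n) : (leaders σ i).Nodup :=
  (List.nodup_finRange n).filter _

theorem leaders_eq_filter {p : Fin n → Bool}
    (h : ∀ x, x ∈ leaders τ i ↔ x ∈ leaders σ i ∧ p x = true) :
    leaders τ i = (leaders σ i).filter p := by
  rw [leaders, leaders, List.filter_filter]
  refine List.filter_congr fun x _ => Bool.eq_iff_iff.mpr ?_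
  simpa [leaders, and_comm] using h x

theorem leaders_reverseCycle : leaders (σ.reverseCycle j) i = leaders σ i := by
  rw [leaders_eq_filter (p := fun _ => true), List.filter_true]
  simp [mem_leaders_iff, sameCycle_reverseCycle_iff]

theorem exists_mem_leaders_sameCycle (h : ¬σ.SameCycle i j) :
    ∃ l ∈ leaders σ i, σ.SameCycle j l := by
  classical
  let c := (Finset.univ.filter (σ.SameCycle j)).min'
    ⟨j, Finset.mem_filter.mpr ⟨Finset.mem_univ j, SameCycle.refl σ j⟩⟩
  have hc : σ.SameCycle j c := (Finset.mem_filter.mp (Finset.min'_mem _ _)).2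
  refine ⟨c, mem_leaders_iff.mpr ⟨fun y hy => Finset.min'_le _ _ ?_, fun h' => h ?_⟩, hc⟩
  · simpa using hc.trans hy
  · exact h'.trans hc.symm

theorem eq_of_mem_leaders_of_sameCycle {x y : Fin n} (hx : x ∈ leaders σ i)
    (hy : y ∈ leaders σ i) (hxy : σ.SameCycle x y) : x = y :=
  le_antisymm ((mem_leaders_iff.mp hx).1 y hxy) ((mem_leaders_iff.mp hy).1 x hxy.symm)

theorem not_sameCycle_of_mem_leaders (hl : l ∈ leaders σ i) (hjl : σ.SameCycle j l)
    (hx : x ∈ leaders σ i) (hxl : x ≠ l) : ¬σ.SameCycle j x := fun hjx =>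
  hxl (eq_of_mem_leaders_of_sameCycle hx hl (hjx.symm.trans hjl))

theorem leaders_mul_swap (h : ¬σ.SameCycle i j) (hl : l ∈ leaders σ i)
    (hjl : σ.SameCycle j l) :
    leaders (σ * swap i j) i = (leaders σ i).filter (· ≠ l) := by
  refine leaders_eq_filter fun x => ?_
  simp only [mem_leaders_iff, sameCycle_mul_swap_iff h, not_or, ne_eq, decide_eq_true_eq]
  constructor
  · rintro ⟨hmin, hix, hjx⟩
    have hcongr := sameCycle_congr_of_iterate_eq
      (iterate_mul_swap_of_not_sameCycle (fun h' => hix h'.symm) (fun h' => hjx h'.symm))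
    refine ⟨⟨fun y hy => hmin y ((hcongr y).mpr hy), hix⟩, ?_⟩
    rintro rfl
    exact hjx hjl
  · rintro ⟨⟨hmin, hix⟩, hxl⟩
    have hjx := not_sameCycle_of_mem_leaders hl hjl (mem_leaders_iff.mpr ⟨hmin, hix⟩) hxl
    have hcongr := sameCycle_congr_of_iterate_eq
      (iterate_mul_swap_of_not_sameCycle (fun h' => hix h'.symm) (fun h' => hjx h'.symm))
    exact ⟨fun y hy => hmin y ((hcongr y).mp hy), hix, hjx⟩

end Leaders

section CycProd

variable {n : ℕ} {M : Matrix (Fin n) (Fin n) ℍ[ℝ]} {σ τ : Perm (Fin n)} {i j x y : Fin n}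

noncomputable def cycTail (M : Matrix (Fin n) (Fin n) ℍ[ℝ]) (σ : Perm (Fin n)) (x : Fin n) :
    ℍ[ℝ] :=
  walkProd M σ (σ x) (minimalPeriod σ x - 1)

theorem cycProd_eq_walkProd : cycProd M σ x = walkProd M σ x (minimalPeriod σ x) := rfl

theorem cycProd_eq_mul_cycTail : cycProd M σ x = M x (σ x) * cycTail M σ x := by
  rw [cycProd_eq_walkProd, ← Nat.sub_add_cancel (σ.minimalPeriod_pos x), walkProd_succ',
    cycTail]

theorem cycProd_congr (h : ∀ t, σ^[t] x = τ^[t] x) : cycProd M σ x = cycProd M τ x := by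
  rw [cycProd_eq_walkProd, cycProd_eq_walkProd, minimalPeriod_congr_of_iterate_eq h]
  exact walkProd_congr_of_iterate_eq fun t _ => h t

theorem cycTail_congr (h : ∀ t, σ^[t] x = τ^[t] x) : cycTail M σ x = cycTail M τ x := by
  rw [cycTail, cycTail, minimalPeriod_congr_of_iterate_eq h]
  exact walkProd_congr_of_iterate_eq fun t _ => by
    rw [← iterate_succ_apply, ← iterate_succ_apply, h]

theorem cycTail_updateRow_self (b : Fin n → ℍ[ℝ]) :
    cycTail (M.updateRow i b) σ i = cycTail M σ i :=
  walkProd_updateRow_of_forall_ne b fun t ht => by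
    rw [← iterate_succ_apply]
    exact not_isPeriodicPt_of_pos_of_lt_minimalPeriod (n := t + 1) (by omega) (by omega)

theorem cycProd_updateRow_self (b : Fin n → ℍ[ℝ]) :
    cycProd (M.updateRow i b) σ i = b (σ i) * cycTail M σ i := by
  rw [cycProd_eq_mul_cycTail, cycTail_updateRow_self, updateRow_self]

theorem cycProd_updateRow_of_not_sameCycle (b : Fin n → ℍ[ℝ]) (h : ¬σ.SameCycle x i) :
    cycProd (M.updateRow i b) σ x = cycProd M σ x :=
  walkProd_updateRow_of_forall_ne b fun t _ ht => h (ht ▸ sameCycle_iterate x t)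

theorem cycProd_inv (hM : M.IsHermitian) : cycProd M σ⁻¹ x = star (cycProd M σ x) := by
  rw [cycProd_eq_walkProd, cycProd_eq_walkProd, star_walkProd, iterate_minimalPeriod,
    minimalPeriod_inv, hM.eq]

theorem re_cycProd_of_sameCycle (h : σ.SameCycle x y) :
    (cycProd M σ y).re = (cycProd M σ x).re := by
  obtain ⟨t, ht, rfl⟩ := sameCycle_iff_exists_iterate_lt.mp h
  have hc : minimalPeriod σ (σ^[t] x) = minimalPeriod σ x :=
    minimalPeriod_apply_iterate (σ.injective.mem_periodicPts x) t
  have hback : σ^[minimalPeriod σ x - t] (σ^[t] x) = x := by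
    rw [← iterate_add_apply, Nat.sub_add_cancel ht.le, iterate_minimalPeriod]
  have hx := walkProd_add (M := M) (f := σ) (x := x) t (minimalPeriod σ x - t)
  have hy := walkProd_add (M := M) (f := σ) (x := σ^[t] x) (minimalPeriod σ x - t) t
  rw [Nat.add_sub_cancel' ht.le] at hx
  rw [Nat.sub_add_cancel ht.le, hback] at hy
  rw [cycProd_eq_walkProd, cycProd_eq_walkProd, hc, hx, hy, Quaternion.re_mul_comm]

theorem cycTail_mul_swap (h : ¬σ.SameCycle i j) :
    cycTail M (σ * swap i j) i = cycTail M σ j * (M j (σ i) * cycTail M σ i) := by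
  have hd := σ.minimalPeriod_pos j
  have hc := σ.minimalPeriod_pos i
  have hτi : (σ * swap i j) i = σ j := by rw [mul_apply, swap_apply_left]
  have hτj : (σ * swap i j) j = σ i := by rw [mul_apply, swap_apply_right]
  have hleft : ∀ t ≤ minimalPeriod σ j - 1, (σ * swap i j)^[t] (σ j) = σ^[t] (σ j) := by
    intro t ht
    calc (σ * swap i j)^[t] (σ j) = (σ * swap i j)^[t + 1] i := by rw [iterate_succ_apply, hτi]
      _ = σ^[t] (σ j) := iterate_mul_swap_left h (by omega) (by omega)
  have hright : ∀ t ≤ minimalPeriod σ i - 1, (σ * swap i j)^[t] (σ i) = σ^[t] (σ i) := by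
    intro t ht
    calc (σ * swap i j)^[t] (σ i) = (σ * swap i j)^[t + 1] j := by rw [iterate_succ_apply, hτj]
      _ = σ^[t] (σ i) := iterate_mul_swap_right h (by omega) (by omega)
  have hmid : (σ * swap i j)^[minimalPeriod σ j - 1] (σ j) = j := by
    rw [hleft _ le_rfl, ← iterate_succ_apply,
      show (minimalPeriod σ j - 1).succ = minimalPeriod σ j by omega, iterate_minimalPeriod]
  rw [cycTail, minimalPeriod_mul_swap h, hτi,
    show minimalPeriod σ j + minimalPeriod σ i - 1
      = (minimalPeriod σ j - 1) + (minimalPeriod σ i - 1 + 1) by omega,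
    walkProd_add, hmid, walkProd_succ', hτj, walkProd_congr_of_iterate_eq hleft,
    walkProd_congr_of_iterate_eq hright, cycTail, cycTail]

theorem cycProd_reverseCycle_of_not_sameCycle (h : ¬σ.SameCycle j x) :
    cycProd M (σ.reverseCycle j) x = cycProd M σ x :=
  cycProd_congr (iterate_reverseCycle_of_not_sameCycle h)

theorem cycProd_reverseCycle_of_sameCycle (hM : M.IsHermitian) (h : σ.SameCycle j x) :
    cycProd M (σ.reverseCycle j) x = star (cycProd M σ x) :=
  (cycProd_congr (iterate_reverseCycle_of_sameCycle h)).trans (cycProd_inv hM)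

theorem cycProd_updateRow_mul_swap (h : ¬σ.SameCycle i j) :
    cycProd (M.updateRow i (M j)) (σ * swap i j) i
      = cycProd M σ j * cycProd (M.updateRow i (M j)) σ i := by
  rw [cycProd_updateRow_self, cycProd_updateRow_self, mul_apply, swap_apply_left,
    cycTail_mul_swap h, cycProd_eq_mul_cycTail (x := j), mul_assoc]

end CycProd

section RowDeterminants

variable {n : ℕ} {M : Matrix (Fin n) (Fin n) ℍ[ℝ]} {i : Fin n}

noncomputable def rdetTerm (M : Matrix (Fin n) (Fin n) ℍ[ℝ]) (i : Fin n) (σ : Perm (Fin n)) :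
    ℍ[ℝ] :=
  ((sign σ : ℤ) : ℍ[ℝ]) * (cycProd M σ i * ((leaders σ i).map (cycProd M σ)).prod)

noncomputable def cdetTerm (M : Matrix (Fin n) (Fin n) ℍ[ℝ]) (i : Fin n) (σ : Perm (Fin n)) :
    ℍ[ℝ] :=
  ((sign σ : ℤ) : ℍ[ℝ]) * (((leaders σ i).reverse.map (cycProd M σ)).prod * cycProd M σ i)

theorem rdet_eq_sum_rdetTerm : rdet M i = ∑ σ, rdetTerm M i σ := rfl

theorem cdet_eq_sum_cdetTerm : cdet M i = ∑ σ, cdetTerm M i σ := rfl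

theorem map_cycProd_updateRow_leaders (b : Fin n → ℍ[ℝ]) (σ : Perm (Fin n)) :
    (leaders σ i).map (cycProd (M.updateRow i b) σ) = (leaders σ i).map (cycProd M σ) :=
  List.map_congr_left fun _ hx =>
    cycProd_updateRow_of_not_sameCycle b fun h => (mem_leaders_iff.mp hx).2 h.symm

theorem rdetTerm_updateRow (b : Fin n → ℍ[ℝ]) (σ : Perm (Fin n)) :
    rdetTerm (M.updateRow i b) i σ = ((sign σ : ℤ) : ℍ[ℝ]) *
      (b (σ i) * cycTail M σ i * ((leaders σ i).map (cycProd M σ)).prod) := by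
  rw [rdetTerm, cycProd_updateRow_self, map_cycProd_updateRow_leaders]

theorem cdetTerm_updateRow (b : Fin n → ℍ[ℝ]) (σ : Perm (Fin n)) :
    cdetTerm (M.updateRow i b) i σ = ((sign σ : ℤ) : ℍ[ℝ]) *
      (((leaders σ i).reverse.map (cycProd M σ)).prod * (b (σ i) * cycTail M σ i)) := by
  rw [cdetTerm, cycProd_updateRow_self, List.map_reverse, map_cycProd_updateRow_leaders,
    ← List.map_reverse]

theorem rdet_updateRow_sum {ι : Type*} (s : Finset ι) (v : ι → Fin n → ℍ[ℝ]) :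
    rdet (M.updateRow i (∑ l ∈ s, v l)) i = ∑ l ∈ s, rdet (M.updateRow i (v l)) i := by
  simp only [rdet_eq_sum_rdetTerm, rdetTerm_updateRow, Finset.sum_apply, Finset.sum_mul,
    Finset.mul_sum]
  exact Finset.sum_comm

theorem cdet_updateRow_sum {ι : Type*} (s : Finset ι) (v : ι → Fin n → ℍ[ℝ]) :
    cdet (M.updateRow i (∑ l ∈ s, v l)) i = ∑ l ∈ s, cdet (M.updateRow i (v l)) i := by
  simp only [cdet_eq_sum_cdetTerm, cdetTerm_updateRow, Finset.sum_apply, Finset.sum_mul,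
    Finset.mul_sum]
  exact Finset.sum_comm

end RowDeterminants

section Quartet

variable {n : ℕ} {A M : Matrix (Fin n) (Fin n) ℍ[ℝ]} {σ : Perm (Fin n)} {i j l : Fin n}

theorem coe_sign_mul_swap (hij : i ≠ j) :
    ((sign (σ * swap i j) : ℤ) : ℍ[ℝ]) = -((sign σ : ℤ) : ℍ[ℝ]) := by
  simp [sign_swap hij]

theorem map_cycProd_reverseCycle_leaders (hA : A.IsHermitian) (hl : l ∈ leaders σ i)
    (hjl : σ.SameCycle j l) :
    (leaders (σ.reverseCycle j) i).map (cycProd A (σ.reverseCycle j))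
      = (leaders σ i).map (update (cycProd A σ) l (star (cycProd A σ l))) := by
  rw [leaders_reverseCycle]
  refine List.map_congr_left fun x hx => ?_
  rcases eq_or_ne x l with rfl | hxl
  · rw [update_self, cycProd_reverseCycle_of_sameCycle hA hjl]
  · rw [update_of_ne hxl, cycProd_reverseCycle_of_not_sameCycle
      (not_sameCycle_of_mem_leaders hl hjl hx hxl)]

theorem map_cycProd_mul_swap_leaders (h : ¬σ.SameCycle i j) (hl : l ∈ leaders σ i)
    (hjl : σ.SameCycle j l) :
    (leaders (σ * swap i j) i).map (cycProd M (σ * swap i j))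
      = ((leaders σ i).filter (· ≠ l)).map (cycProd M σ) := by
  rw [leaders_mul_swap h hl hjl]
  refine List.map_congr_left fun x hx => ?_
  obtain ⟨hx, hxl⟩ := List.mem_filter.mp hx
  have hix : ¬σ.SameCycle x i := fun h' => (mem_leaders_iff.mp hx).2 h'.symm
  have hjx : ¬σ.SameCycle x j := fun h' =>
    not_sameCycle_of_mem_leaders hl hjl hx (of_decide_eq_true hxl) h'.symm
  exact cycProd_congr (iterate_mul_swap_of_not_sameCycle hix hjx)

theorem map_cycProd_reverseCycle_leaders_filter (hl : l ∈ leaders σ i)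
    (hjl : σ.SameCycle j l) :
    ((leaders σ i).filter (· ≠ l)).map (cycProd A (σ.reverseCycle j))
      = ((leaders σ i).filter (· ≠ l)).map (cycProd A σ) := by
  refine List.map_congr_left fun x hx => ?_
  obtain ⟨hx, hxl⟩ := List.mem_filter.mp hx
  exact cycProd_reverseCycle_of_not_sameCycle
    (not_sameCycle_of_mem_leaders hl hjl hx (of_decide_eq_true hxl))

theorem cycProd_updateRow_quartet (hA : A.IsHermitian) (h : ¬σ.SameCycle i j) :
    cycProd (A.updateRow i (A j)) (σ.reverseCycle j) i = cycProd (A.updateRow i (A j)) σ i ∧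
    cycProd (A.updateRow i (A j)) (σ * swap i j) i
      = cycProd A σ j * cycProd (A.updateRow i (A j)) σ i ∧
    cycProd (A.updateRow i (A j)) (σ.reverseCycle j * swap i j) i
      = star (cycProd A σ j) * cycProd (A.updateRow i (A j)) σ i := by
  have hρ : cycProd (A.updateRow i (A j)) (σ.reverseCycle j) i
      = cycProd (A.updateRow i (A j)) σ i :=
    cycProd_reverseCycle_of_not_sameCycle fun h' => h h'.symm
  refine ⟨hρ, cycProd_updateRow_mul_swap h, ?_⟩
  rw [cycProd_updateRow_mul_swap (mt sameCycle_reverseCycle_iff.mp h), hρ,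
    cycProd_reverseCycle_of_sameCycle hA (SameCycle.refl σ j)]

theorem map_cycProd_leaders_quartet (hA : A.IsHermitian) (h : ¬σ.SameCycle i j)
    (hl : l ∈ leaders σ i) (hjl : σ.SameCycle j l) :
    (leaders (σ.reverseCycle j) i).map (cycProd A (σ.reverseCycle j))
      = (leaders σ i).map (update (cycProd A σ) l (star (cycProd A σ l))) ∧
    (leaders (σ * swap i j) i).map (cycProd A (σ * swap i j))
      = ((leaders σ i).filter (· ≠ l)).map (cycProd A σ) ∧
    (leaders (σ.reverseCycle j * swap i j) i).map (cycProd A (σ.reverseCycle j * swap i j))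
      = ((leaders σ i).filter (· ≠ l)).map (cycProd A σ) := by
  refine ⟨map_cycProd_reverseCycle_leaders hA hl hjl, map_cycProd_mul_swap_leaders h hl hjl, ?_⟩
  rw [map_cycProd_mul_swap_leaders (mt sameCycle_reverseCycle_iff.mp h)
      (by rwa [leaders_reverseCycle]) (sameCycle_reverseCycle_iff.mpr hjl),
    leaders_reverseCycle, map_cycProd_reverseCycle_leaders_filter hl hjl]

end Quartet

section Algebra

variable {n : ℕ} {L : List (Fin n)} {l : Fin n}

theorem prod_map_add_prod_map_update_star (hL : L.Nodup) (hl : l ∈ L) (f : Fin n → ℍ[ℝ]) :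
    (L.map f).prod + (L.map (update f l (star (f l)))).prod
      = ((2 * (f l).re : ℝ) : ℍ[ℝ]) * ((L.filter (· ≠ l)).map f).prod := by
  have h := List.prod_map_update_add hL hl f (f l) (star (f l))
  rw [update_eq_self] at h
  rw [h, self_add_star', List.prod_map_update_of_commute hL hl _ (Quaternion.coe_commutes _)]

theorem rdet_quartet_algebra (hL : L.Nodup) (hl : l ∈ L) (f : Fin n → ℍ[ℝ])
    {ε c W Q : ℍ[ℝ]} (hQ : Q.re = (f l).re) :
    ε * (c * W * (L.map f).prod) + ε * (c * W * (L.map (update f l (star (f l)))).prod)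
      + -ε * (c * (Q * W) * ((L.filter (· ≠ l)).map f).prod)
      + -ε * (c * (star Q * W) * ((L.filter (· ≠ l)).map f).prod) = 0 := by
  rw [← mul_add, ← mul_add, prod_map_add_prod_map_update_star hL hl, add_assoc, ← mul_add,
    ← add_mul, ← mul_add, ← add_mul, self_add_star', hQ]
  simp only [Quaternion.coe_mul_eq_smul, mul_smul_comm, smul_mul_assoc, neg_mul, smul_neg,
    add_neg_cancel]

theorem cdet_quartet_algebra (hL : L.Nodup) (hl : l ∈ L) (f : Fin n → ℍ[ℝ])
    {ε c W Q : ℍ[ℝ]} (hQ : Q.re = (f l).re) :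
    ε * ((L.map f).reverse.prod * (c * W))
      + ε * ((L.map (update f l (star (f l)))).reverse.prod * (c * W))
      + -ε * (((L.filter (· ≠ l)).map f).reverse.prod * (c * (Q * W)))
      + -ε * (((L.filter (· ≠ l)).map f).reverse.prod * (c * (star Q * W))) = 0 := by
  simp only [← List.map_reverse]
  rw [← mul_add, ← add_mul,
    prod_map_add_prod_map_update_star (List.nodup_reverse.mpr hL) (List.mem_reverse.mpr hl),
    ← List.filter_reverse, add_assoc, ← mul_add, ← mul_add, ← mul_add, ← add_mul,
    self_add_star', hQ]
  simp only [Quaternion.coe_mul_eq_smul, mul_smul_comm, smul_mul_assoc, neg_mul, smul_neg,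
    add_neg_cancel]

end Algebra

section Cancellation

variable {n : ℕ} {A : Matrix (Fin n) (Fin n) ℍ[ℝ]} {i j : Fin n}

theorem rdetTerm_updateRow_smul (c : ℍ[ℝ]) (σ : Perm (Fin n)) :
    rdetTerm (A.updateRow i (c • A j)) i σ = ((sign σ : ℤ) : ℍ[ℝ]) *
      (c * cycProd (A.updateRow i (A j)) σ i * ((leaders σ i).map (cycProd A σ)).prod) := by
  rw [rdetTerm_updateRow, cycProd_updateRow_self, Pi.smul_apply, smul_eq_mul, mul_assoc c]

theorem cdetTerm_updateRow_smul (c : ℍ[ℝ]) (σ : Perm (Fin n)) :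
    cdetTerm (A.updateRow i (c • A j)) i σ = ((sign σ : ℤ) : ℍ[ℝ]) *
      (((leaders σ i).map (cycProd A σ)).reverse.prod
        * (c * cycProd (A.updateRow i (A j)) σ i)) := by
  rw [cdetTerm_updateRow, cycProd_updateRow_self, Pi.smul_apply, smul_eq_mul, mul_assoc c,
    List.map_reverse]

theorem rdet_updateRow_smul_row_eq_zero (hA : A.IsHermitian) (hji : j ≠ i) (c : ℍ[ℝ]) :
    rdet (A.updateRow i (c • A j)) i = 0 := by
  have := IsAddTorsionFree.of_module_rat ℍ[ℝ]
  rw [rdet_eq_sum_rdetTerm]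
  refine sum_eq_zero_of_quartets hji.symm _ fun σ h => ?_
  obtain ⟨l, hl, hjl⟩ := exists_mem_leaders_sameCycle h
  obtain ⟨hρ, hτ, hτ'⟩ := cycProd_updateRow_quartet hA h
  obtain ⟨hLρ, hLτ, hLτ'⟩ := map_cycProd_leaders_quartet hA h hl hjl
  simp only [rdetTerm_updateRow_smul, sign_reverseCycle, coe_sign_mul_swap hji.symm, hρ, hτ, hτ',
    hLρ, hLτ, hLτ']
  exact rdet_quartet_algebra (nodup_leaders σ i) hl _ (re_cycProd_of_sameCycle hjl.symm)

theorem cdet_updateRow_smul_row_eq_zero (hA : A.IsHermitian) (hji : j ≠ i) (c : ℍ[ℝ]) :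
    cdet (A.updateRow i (c • A j)) i = 0 := by
  have := IsAddTorsionFree.of_module_rat ℍ[ℝ]
  rw [cdet_eq_sum_cdetTerm]
  refine sum_eq_zero_of_quartets hji.symm _ fun σ h => ?_
  obtain ⟨l, hl, hjl⟩ := exists_mem_leaders_sameCycle h
  obtain ⟨hρ, hτ, hτ'⟩ := cycProd_updateRow_quartet hA h
  obtain ⟨hLρ, hLτ, hLτ'⟩ := map_cycProd_leaders_quartet hA h hl hjl
  simp only [cdetTerm_updateRow_smul, sign_reverseCycle, coe_sign_mul_swap hji.symm, hρ, hτ, hτ',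
    hLρ, hLτ, hLτ']
  exact cdet_quartet_algebra (nodup_leaders σ i) hl _ (re_cycProd_of_sameCycle hjl.symm)

end Cancellation

/-- if the `i`-th row of a Hermitian matrix is replaced by a left
linear combination of its other rows, then the `i`-th row and column
determinants of the resulting matrix vanish. -/
theorem stmt6 {n : ℕ} (A : Matrix (Fin n) (Fin n) ℍ[ℝ]) (hA : A.IsHermitian)
    (i : Fin n) (k : ℕ) (c : Fin k → ℍ[ℝ]) (e : Fin k → Fin n)
    (he : ∀ l, e l ≠ i) :
    rdet (A.updateRow i fun t => ∑ l, c l * A (e l) t) i = 0 ∧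
    cdet (A.updateRow i fun t => ∑ l, c l * A (e l) t) i = 0 := by
  have hb : (fun t => ∑ l, c l * A (e l) t) = ∑ l, c l • A (e l) := by
    funext t
    simp [Finset.sum_apply]
  rw [hb, rdet_updateRow_sum, cdet_updateRow_sum]
  exact ⟨Finset.sum_eq_zero fun l _ => rdet_updateRow_smul_row_eq_zero hA (he l) (c l),
    Finset.sum_eq_zero fun l _ => cdet_updateRow_smul_row_eq_zero hA (he l) (c l)⟩
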